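/- arXiv:2508.09509 — 2 statements merged into one kernel-verified Lean document; each statement's English description precedes it below -/
import Mathlib

section
/- Let k_x, k_y, k_c ∈ ℝ with Δ := k_x k_y − k_c² > 0 and k_x, k_y > 0, and let α_s, Δt ∈ ℝ with Δt > 0. Set β_x = k_x α_s Δt/Δ, β_y = k_y α_s Δt/Δ, β_c = k_c α_s Δt/Δ, and B = [[1+β_y, −β_c],[−β_c, 1+β_x]]. Then det B < 0 if and only if α_s⁻ < α_s < α_s⁺, where α_s^± = (−(k_x+k_y) ± √((k_x−k_y)² + 4k_c²))/(2Δt). -/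
theorem detB_neg_iff
    (kx ky kc αs Δt : ℝ) (hkx : 0 < kx) (hky : 0 < ky)
    (hΔ : 0 < kx * ky - kc ^ 2) (hΔt : 0 < Δt)
    (Δ βx βy βc : ℝ)
    (hΔdef : Δ = kx * ky - kc ^ 2)
    (hβx : βx = kx * αs * Δt / Δ) (hβy : βy = ky * αs * Δt / Δ)
    (hβc : βc = kc * αs * Δt / Δ)
    (B : Matrix (Fin 2) (Fin 2) ℝ)
    (hB : B = !![1 + βy, -βc; -βc, 1 + βx])
    (αm αp : ℝ)
    (hαm : αm = (-(kx + ky) - Real.sqrt ((kx - ky) ^ 2 + 4 * kc ^ 2)) / (2 * Δt))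
    (hαp : αp = (-(kx + ky) + Real.sqrt ((kx - ky) ^ 2 + 4 * kc ^ 2)) / (2 * Δt)) :
    B.det < 0 ↔ αm < αs ∧ αs < αp := by
  set s := Real.sqrt ((kx - ky) ^ 2 + 4 * kc ^ 2) with hs
  have hsnn : 0 ≤ s := Real.sqrt_nonneg _
  have hs2 : s ^ 2 = (kx - ky) ^ 2 + 4 * kc ^ 2 := Real.sq_sqrt (by positivity)
  have hΔpos : 0 < Δ := hΔdef ▸ hΔ
  have hΔne : Δ ≠ 0 := ne_of_gt hΔpos
  have hΔtne : Δt ≠ 0 := ne_of_gt hΔt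
  have hdet : B.det = (Δ + (kx + ky) * αs * Δt + αs ^ 2 * Δt ^ 2) / Δ := by
    subst hB hβx hβy hβc
    rw [Matrix.det_fin_two_of]
    field_simp
    rw [hΔdef]; ring
  have hfact : Δ + (kx + ky) * αs * Δt + αs ^ 2 * Δt ^ 2
      = Δt ^ 2 * ((αs - αm) * (αs - αp)) := by
    rw [hαm, hαp, hΔdef]
    field_simp
    nlinarith [hs2]
  have hle : αm ≤ αp := by
    rw [hαm, hαp]
    apply div_le_div_of_nonneg_right (by linarith) (by linarith)
  rw [hdet, div_neg_iff]
  constructor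
  · rintro (⟨h1, h2⟩ | ⟨h1, h2⟩)
    · linarith
    · rw [hfact] at h1
      have h3 : (αs - αm) * (αs - αp) < 0 := by
        by_contra h
        push_neg at h
        nlinarith [pow_pos hΔt 2]
      rcases mul_neg_iff.mp h3 with ⟨ha, hb⟩ | ⟨ha, hb⟩
      · exact ⟨by linarith, by linarith⟩
      · linarith
  · rintro ⟨h1, h2⟩
    refine Or.inr ⟨?_, hΔpos⟩
    rw [hfact]
    exact mul_neg_of_pos_of_neg (pow_pos hΔt 2)
      (mul_neg_of_pos_of_neg (by linarith) (by linarith))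
end

section
/- With Δx = Δy = h and the substitution of the implicit (u,v)-update into the φ-update, the resulting one-step scheme φ^{n+1}_{ij} = Σ C_{kℓ} φ^n_{kℓ} has cross-diagonal coefficients C_{i+1,j+1} = C_{i−1,j−1} = (β_c/(2 det B))(Δt/h)² α_s and C_{i+1,j−1} = C_{i−1,j+1} = −(β_c/(2 det B))(Δt/h)² α_s; hence at least one cross coefficient is strictly negative whenever k_c ≠ 0 and α_s ≠ 0, so the scheme is never exactly monotone; moreover these coefficients are O(α_s²) as α_s → 0. -/
theorem cross_coefficients_never_monotone
    (kx ky kc Δt h : ℝ) (hkx : 0 < kx) (hky : 0 < ky)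
    (hΔpos : 0 < kx * ky - kc ^ 2) (hΔt : 0 < Δt) (hh : 0 < h)
    (hkc : kc ≠ 0)
    (Δ : ℝ) (hΔdef : Δ = kx * ky - kc ^ 2)
    (βc detB Ccross : ℝ → ℝ)
    (hβc : βc = fun a => kc * a * Δt / Δ)
    (hdetB : detB = fun a =>
      (1 + ky * a * Δt / Δ) * (1 + kx * a * Δt / Δ) - (βc a) ^ 2)
    (hC : Ccross = fun a => βc a / (2 * detB a) * (Δt / h) ^ 2 * a) :
    (∀ αs : ℝ, αs ≠ 0 → detB αs ≠ 0 →
      (Ccross αs < 0 ∨ -Ccross αs < 0)) ∧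
    (Ccross =O[nhds (0 : ℝ)] fun a => a ^ 2) ∧
    ((fun a => βc a * a / detB a - (kc * Δt / Δ) * a ^ 2)
        =O[nhds (0 : ℝ)] fun a => a ^ 3) := by
  have hΔne : Δ ≠ 0 := by rw [hΔdef]; exact ne_of_gt hΔpos
  have hdetBcont : Continuous detB := by
    rw [hdetB, hβc]; fun_prop
  have hdetB0 : detB 0 = 1 := by simp [hdetB, hβc]
  have hev : ∀ᶠ a in nhds (0 : ℝ), detB a ≠ 0 := by
    have : ∀ᶠ a in nhds (0 : ℝ), detB a ∈ {x : ℝ | x ≠ 0} := by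
      apply hdetBcont.continuousAt.eventually_mem
      rw [hdetB0]
      exact isOpen_ne.mem_nhds one_ne_zero
    exact this
  have hd0 : detB 0 ≠ 0 := by rw [hdetB0]; exact one_ne_zero
  refine ⟨?_, ?_, ?_⟩
  · intro αs hαs hd
    have hne : Ccross αs ≠ 0 := by
      rw [hC]
      refine mul_ne_zero (mul_ne_zero (div_ne_zero ?_ (mul_ne_zero two_ne_zero hd))
        (pow_ne_zero _ (div_ne_zero hΔt.ne' hh.ne'))) hαs
      rw [hβc]
      exact div_ne_zero (mul_ne_zero (mul_ne_zero hkc hαs) hΔt.ne') hΔne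
    rcases hne.lt_or_gt with h1 | h1
    · exact Or.inl h1
    · exact Or.inr (by linarith)
  · -- Ccross =O a^2
    set g : ℝ → ℝ := fun a => kc * Δt / Δ * (Δt / h) ^ 2 / (2 * detB a) with hg
    have hgc : ContinuousAt g 0 := by
      apply ContinuousAt.div continuousAt_const
      · exact (continuous_const.mul hdetBcont).continuousAt
      · simpa [hdetB0] using (mul_ne_zero (two_ne_zero (α := ℝ)) hd0)
    have h1 : g =O[nhds (0 : ℝ)] (fun _ => (1 : ℝ)) := hgc.isBigO_one ℝ
    have h2 : (fun a => g a * a ^ 2) =O[nhds (0 : ℝ)] fun a => a ^ 2 := by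
      simpa using h1.mul (Asymptotics.isBigO_refl (fun a : ℝ => a ^ 2) (nhds 0))
    refine h2.congr' ?_ (Filter.EventuallyEq.refl _ _)
    filter_upwards with a
    rw [hg, hC, hβc]
    ring
  · -- remainder =O a^3
    set r : ℝ → ℝ := fun a =>
      -(kc * Δt / Δ) * ((kx + ky) * Δt / Δ + Δt ^ 2 / Δ * a) / detB a with hr
    have hrc : ContinuousAt r 0 := by
      apply ContinuousAt.div
      · fun_prop
      · exact hdetBcont.continuousAt
      · exact hd0
    have h1 : r =O[nhds (0 : ℝ)] (fun _ => (1 : ℝ)) := hrc.isBigO_one ℝ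
    have h2 : (fun a => r a * a ^ 3) =O[nhds (0 : ℝ)] fun a => a ^ 3 := by
      simpa using h1.mul (Asymptotics.isBigO_refl (fun a : ℝ => a ^ 3) (nhds 0))
    refine h2.congr' ?_ (Filter.EventuallyEq.refl _ _)
    filter_upwards [hev] with a hd
    have hdexp : detB a = 1 + (kx + ky) * Δt / Δ * a + Δt ^ 2 / Δ * a ^ 2 := by
      rw [hdetB, hβc]
      field_simp
      rw [hΔdef]
      ring
    have hd1 : (1 : ℝ) + (kx + ky) * Δt / Δ * a + Δt ^ 2 / Δ * a ^ 2 ≠ 0 := by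
      rw [← hdexp]; exact hd
    simp only [hr, hβc]
    field_simp [hd]
    rw [hdexp]
    field_simp
    ring
end
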